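/- arXiv:2509.25684 — 2 statements merged into one kernel-verified Lean document; each statement's English description precedes it below -/
import Mathlib

section
/- For every u ∈ ℝ^E and every real λ < 1, the support of the Sparsegen routing output p* = sparsegen(u, λ) satisfies {i : p*_i > 0} = {i : u_i > τ}, and this set has exactly k* elements, where τ = (U_{k*} − 1 + λ)/k* and k* = max{k ∈ {1,…,E} : 1 − λ + k·u_(k) > U_k}. -/
noncomputable section

/-- The probability simplex in `ℝ^E`. -/
def simplex (E : ℕ) : Set (EuclideanSpace ℝ (Fin E)) :=
  {p | (∀ i, 0 ≤ p i) ∧ ∑ i, p i = 1}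

/-- The Sparsegen objective `g_{u,λ}(p) = ‖p − u‖₂² − λ‖p‖₂²`. -/
def sparsegenObj {E : ℕ} (u : EuclideanSpace ℝ (Fin E)) (lam : ℝ)
    (p : EuclideanSpace ℝ (Fin E)) : ℝ :=
  ‖p - u‖ ^ 2 - lam * ‖p‖ ^ 2

/-- `U k = Σ_{i=1}^{k} u_(i)` where `u_(i) = u (σ i)` are the sorted coordinates;
here `k : Fin E` corresponds to the paper's 1-based index `k + 1`. -/
def sortedPartialSum {E : ℕ} (u : EuclideanSpace ℝ (Fin E)) (σ : Equiv.Perm (Fin E))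
    (k : Fin E) : ℝ :=
  ∑ i ∈ Finset.Iic k, u (σ i)

/-!
The choice of `k*` makes `{i | τ < u i}` the set of the `k* + 1` largest coordinates, so
`∑ max (u_i - τ, 0) = U_{k*} - (k* + 1) τ = 1 - λ` and `q_i = max (u_i - τ, 0) / (1 - λ)` lies on
the simplex. Writing `u = (1 - λ) q + τ + min (u - τ, 0)` coordinatewise gives, for every `p` on
the simplex, `g p - g q = (1 - λ) ‖p - q‖² - 2 ∑ p_i min (u_i - τ, 0) ≥ (1 - λ) ‖p - q‖²`, so the
minimizer is `q`, whose support is `{i | τ < u i}`.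
-/

lemma sparsegenObj_eq_sum {E : ℕ} (u : EuclideanSpace ℝ (Fin E)) (lam : ℝ)
    (x : EuclideanSpace ℝ (Fin E)) :
    sparsegenObj u lam x = ∑ i, ((x i - u i) ^ 2 - lam * x i ^ 2) := by
  simp only [sparsegenObj, EuclideanSpace.norm_sq_eq, Real.norm_eq_abs, sq_abs, PiLp.sub_apply,
    Finset.mul_sum, Finset.sum_sub_distrib]

def thresholdPoint {E : ℕ} (u : EuclideanSpace ℝ (Fin E)) (lam τ : ℝ) :
    EuclideanSpace ℝ (Fin E) :=
  WithLp.toLp 2 fun i => max (u i - τ) 0 / (1 - lam)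

section thresholdPoint

variable {E : ℕ} {u : EuclideanSpace ℝ (Fin E)} {lam τ : ℝ}

lemma thresholdPoint_apply (i : Fin E) :
    thresholdPoint u lam τ i = max (u i - τ) 0 / (1 - lam) := rfl

lemma thresholdPoint_pos_iff (hlam : lam < 1) (i : Fin E) :
    0 < thresholdPoint u lam τ i ↔ τ < u i := by
  rw [thresholdPoint_apply, div_pos_iff_of_pos_right (sub_pos.mpr hlam), lt_max_iff]
  simp only [lt_self_iff_false, or_false, sub_pos]

lemma sum_thresholdPoint (hlam : lam ≠ 1) (hsum : ∑ i, max (u i - τ) 0 = 1 - lam) :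
    ∑ i, thresholdPoint u lam τ i = 1 := by
  simp only [thresholdPoint_apply, ← Finset.sum_div, hsum]
  exact div_self (sub_ne_zero.mpr hlam.symm)

lemma thresholdPoint_mem_simplex (hlam : lam < 1) (hsum : ∑ i, max (u i - τ) 0 = 1 - lam) :
    thresholdPoint u lam τ ∈ simplex E :=
  ⟨fun _ => div_nonneg (le_max_right _ _) (sub_pos.mpr hlam).le,
    sum_thresholdPoint hlam.ne hsum⟩

lemma sparsegenObj_sub_thresholdPoint_ge (hlam : lam ≠ 1)
    (hsum : ∑ i, max (u i - τ) 0 = 1 - lam) {p : EuclideanSpace ℝ (Fin E)} (hp : p ∈ simplex E) :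
    (1 - lam) * ‖p - thresholdPoint u lam τ‖ ^ 2 ≤
      sparsegenObj u lam p - sparsegenObj u lam (thresholdPoint u lam τ) := by
  set q := thresholdPoint u lam τ
  have hlam' : 1 - lam ≠ 0 := sub_ne_zero.mpr hlam.symm
  have hdecomp (i : Fin E) : u i = (1 - lam) * q i + τ + min (u i - τ) 0 := by
    rw [thresholdPoint_apply, mul_div_cancel₀ _ hlam']
    linarith [max_add_min (u i - τ) 0]
  have hcompl (i : Fin E) : q i * min (u i - τ) 0 = 0 := by
    rcases le_total (u i) τ with h | h
    · rw [thresholdPoint_apply, max_eq_right (by linarith), zero_div, zero_mul]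
    · rw [min_eq_right (by linarith), mul_zero]
  have hterm (i : Fin E) : ((p i - u i) ^ 2 - lam * p i ^ 2) - ((q i - u i) ^ 2 - lam * q i ^ 2) =
      (1 - lam) * (p i - q i) ^ 2 - 2 * τ * (p i - q i) - 2 * (p i * min (u i - τ) 0) := by
    linear_combination (-2 : ℝ) * (p i - q i) * hdecomp i + 2 * hcompl i
  have hτ : ∑ i, 2 * τ * (p i - q i) = 0 := by
    rw [← Finset.mul_sum, Finset.sum_sub_distrib, hp.2, sum_thresholdPoint hlam hsum, sub_self,
      mul_zero]
  have hmin : ∑ i, p i * min (u i - τ) 0 ≤ 0 :=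
    Finset.sum_nonpos fun i _ => mul_nonpos_of_nonneg_of_nonpos (hp.1 i) (min_le_right _ _)
  rw [sparsegenObj_eq_sum, sparsegenObj_eq_sum, ← Finset.sum_sub_distrib,
    Finset.sum_congr rfl fun i _ => hterm i, Finset.sum_sub_distrib, Finset.sum_sub_distrib, hτ,
    ← Finset.mul_sum, ← Finset.mul_sum, EuclideanSpace.norm_sq_eq]
  simp only [PiLp.sub_apply, Real.norm_eq_abs, sq_abs]
  linarith

lemma eq_thresholdPoint_of_isMinOn (hlam : lam < 1) (hsum : ∑ i, max (u i - τ) 0 = 1 - lam)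
    {p : EuclideanSpace ℝ (Fin E)} (hp : p ∈ simplex E)
    (hmin : IsMinOn (sparsegenObj u lam) (simplex E) p) :
    p = thresholdPoint u lam τ := by
  have hle := sparsegenObj_sub_thresholdPoint_ge hlam.ne hsum hp
  have hge := sub_nonpos.mpr (isMinOn_iff.mp hmin _ (thresholdPoint_mem_simplex hlam hsum))
  have hnorm : ‖p - thresholdPoint u lam τ‖ ^ 2 ≤ 0 :=
    nonpos_of_mul_nonpos_right (hle.trans hge) (sub_pos.mpr hlam)
  rw [← sub_eq_zero, ← norm_eq_zero]
  exact pow_eq_zero_iff two_ne_zero |>.mp (le_antisymm hnorm (sq_nonneg _))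

end thresholdPoint

section sorted

variable {E : ℕ} {u : EuclideanSpace ℝ (Fin E)} {σ : Equiv.Perm (Fin E)} {lam τ : ℝ}
  {kstar : Fin E}

lemma sortedPartialSum_of_covBy {k m : Fin E} (h : k ⋖ m) :
    sortedPartialSum u σ m = sortedPartialSum u σ k + u (σ m) := by
  have hIio : Finset.Iio m = Finset.Iic k := by
    ext x
    simp only [Finset.mem_Iio, Finset.mem_Iic, h.lt_iff_le_left]
  rw [sortedPartialSum, ← Finset.Iio_insert, Finset.sum_insert Finset.notMem_Iio_self, hIio,
    sortedPartialSum, add_comm]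

lemma lt_sorted_of_le (hσ : Antitone fun i => u (σ i))
    (hmem : 1 - lam + ((kstar : ℕ) + 1) * u (σ kstar) > sortedPartialSum u σ kstar)
    (hτ : τ = (sortedPartialSum u σ kstar - 1 + lam) / ((kstar : ℕ) + 1))
    {j : Fin E} (hj : j ≤ kstar) : τ < u (σ j) := by
  refine lt_of_lt_of_le ?_ (hσ hj)
  rw [hτ, div_lt_iff₀ (by positivity)]
  linarith

lemma sorted_le_of_lt (hσ : Antitone fun i => u (σ i))
    (hmax : ∀ k : Fin E,
      (1 - lam + ((k : ℕ) + 1) * u (σ k) > sortedPartialSum u σ k) → k ≤ kstar)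
    (hτ : τ = (sortedPartialSum u σ kstar - 1 + lam) / ((kstar : ℕ) + 1))
    {j : Fin E} (hj : kstar < j) : u (σ j) ≤ τ := by
  obtain ⟨m, hkm, hmj⟩ := exists_covBy_le_of_lt hj
  have hm : ¬ 1 - lam + ((m : ℕ) + 1) * u (σ m) > sortedPartialSum u σ m :=
    fun h => (hkm.lt.trans_le (hmax m h)).false
  have hmval : ((m : ℕ) : ℝ) = (kstar : ℕ) + 1 := by
    exact_mod_cast (Nat.covBy_iff_add_one_eq.mp (Fin.covBy_iff.mp hkm)).symm
  rw [sortedPartialSum_of_covBy hkm, hmval] at hm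
  refine (hσ hmj).trans ?_
  rw [hτ, le_div_iff₀ (by positivity)]
  linarith

lemma filter_lt_eq_map_Iic (hσ : Antitone fun i => u (σ i))
    (hmem : 1 - lam + ((kstar : ℕ) + 1) * u (σ kstar) > sortedPartialSum u σ kstar)
    (hmax : ∀ k : Fin E,
      (1 - lam + ((k : ℕ) + 1) * u (σ k) > sortedPartialSum u σ k) → k ≤ kstar)
    (hτ : τ = (sortedPartialSum u σ kstar - 1 + lam) / ((kstar : ℕ) + 1)) :
    Finset.univ.filter (fun i => τ < u i) = (Finset.Iic kstar).map σ.toEmbedding := by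
  ext i
  rw [Finset.mem_filter, Finset.mem_map_equiv, Finset.mem_Iic]
  refine ⟨fun h => ?_, fun h => ⟨Finset.mem_univ i, ?_⟩⟩
  · by_contra hlt
    have := sorted_le_of_lt hσ hmax hτ (not_le.mp hlt)
    simp only [Equiv.apply_symm_apply] at this
    linarith [h.2]
  · simpa using lt_sorted_of_le hσ hmem hτ h

end sorted

lemma sum_max_sub_eq_sum_filter {ι : Type*} [Fintype ι] (v : ι → ℝ) (τ : ℝ) :
    ∑ i, max (v i - τ) 0 = ∑ i ∈ Finset.univ.filter (fun i => τ < v i), (v i - τ) := by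
  rw [Finset.sum_filter]
  refine Finset.sum_congr rfl fun i _ => ?_
  split_ifs with h
  · exact max_eq_left (sub_nonneg.mpr h.le)
  · exact max_eq_right (sub_nonpos.mpr (not_lt.mp h))

theorem sparsegen_support_general (E : ℕ)
    (u : EuclideanSpace ℝ (Fin E)) (σ : Equiv.Perm (Fin E))
    (hσ : Antitone fun i => u (σ i)) (lam : ℝ) (hlam : lam < 1)
    (kstar : Fin E)
    (hmem : 1 - lam + ((kstar : ℕ) + 1) * u (σ kstar) > sortedPartialSum u σ kstar)
    (hmax : ∀ k : Fin E,
      (1 - lam + ((k : ℕ) + 1) * u (σ k) > sortedPartialSum u σ k) → k ≤ kstar)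
    (τ : ℝ) (hτ : τ = (sortedPartialSum u σ kstar - 1 + lam) / ((kstar : ℕ) + 1))
    (p : EuclideanSpace ℝ (Fin E)) (hp : p ∈ simplex E)
    (hmin : IsMinOn (sparsegenObj u lam) (simplex E) p) :
    {i : Fin E | 0 < p i} = {i : Fin E | τ < u i} ∧
    {i : Fin E | 0 < p i}.ncard = (kstar : ℕ) + 1 := by
  have hfilter := filter_lt_eq_map_Iic hσ hmem hmax hτ
  have hsum : ∑ i, max (u i - τ) 0 = 1 - lam := by
    rw [sum_max_sub_eq_sum_filter, hfilter, Finset.sum_map, Finset.sum_sub_distrib,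
      Finset.sum_const, Fin.card_Iic, nsmul_eq_mul, hτ]
    change sortedPartialSum u σ kstar - _ = _
    push_cast
    field_simp
    ring
  obtain rfl := eq_thresholdPoint_of_isMinOn hlam hsum hp hmin
  have hsupp : {i | 0 < thresholdPoint u lam τ i} = {i | τ < u i} :=
    Set.ext fun i => thresholdPoint_pos_iff hlam i
  refine ⟨hsupp, ?_⟩
  rw [hsupp, ← Finset.coe_filter_univ, hfilter, Set.ncard_coe_finset, Finset.card_map, Fin.card_Iic]

/-- For every `u ∈ ℝ^E` and `λ < 1`, the support of the Sparsegen routing output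
`p* = sparsegen(u, λ)` (the unique minimizer of the objective over the simplex)
satisfies `{i : p*_i > 0} = {i : u_i > τ}`, and this set has exactly `k*` elements
(0-based: `kstar + 1` elements), where `τ = (U_{k*} − 1 + λ)/k*` and `k*` is the
maximal index with `1 − λ + k·u_(k) > U_k`. -/
theorem sparsegen_support (E : ℕ) (hE : 1 ≤ E)
    (u : EuclideanSpace ℝ (Fin E)) (σ : Equiv.Perm (Fin E))
    (hσ : Antitone fun i => u (σ i)) (lam : ℝ) (hlam : lam < 1)
    (kstar : Fin E)
    (hmem : 1 - lam + ((kstar : ℕ) + 1) * u (σ kstar) > sortedPartialSum u σ kstar)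
    (hmax : ∀ k : Fin E,
      (1 - lam + ((k : ℕ) + 1) * u (σ k) > sortedPartialSum u σ k) → k ≤ kstar)
    (τ : ℝ) (hτ : τ = (sortedPartialSum u σ kstar - 1 + lam) / ((kstar : ℕ) + 1))
    (p : EuclideanSpace ℝ (Fin E)) (hp : p ∈ simplex E)
    (hmin : IsMinOn (sparsegenObj u lam) (simplex E) p) :
    {i : Fin E | 0 < p i} = {i : Fin E | τ < u i} ∧
    {i : Fin E | 0 < p i}.ncard = (kstar : ℕ) + 1 :=
  sparsegen_support_general E u σ hσ lam hlam kstar hmem hmax τ hτ p hp hmin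
end
end

section
/- (Full activation, k = E) For every u ∈ ℝ^E and every real λ < 1, the Sparsegen routing output p* = sparsegen(u, λ) satisfies p*_i > 0 for all i ∈ {1,…,E} if and only if λ < 1 − (U_E − E·u_(E)). -/
/-!
On the hyperplane `∑ i, x i = 1` the objective equals `g q + (1 - λ) ‖x - q‖²`, where `q` is the
point at which the gradient `2 ((1 - λ) q - u)` is a constant vector. If `q` lies in the simplex it
is therefore the minimizer. If the minimizer `p` is strictly positive, a short step from `p` towards
`q` stays in the simplex and shrinks `‖x - q‖`, so again `p = q`. Full activation thus means
`q > 0`, and `q` is smallest where `u` is, which gives the stated inequality.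
-/

noncomputable section

open Filter Topology

section

variable {E : ℕ} {u p : EuclideanSpace ℝ (Fin E)} {lam : ℝ}

theorem sparsegenObj_add (u q d : EuclideanSpace ℝ (Fin E)) (lam : ℝ) :
    sparsegenObj u lam (q + d) =
      sparsegenObj u lam q + 2 * inner ℝ ((1 - lam) • q - u) d + (1 - lam) * ‖d‖ ^ 2 := by
  have h₁ : q + d - u = (q - u) + d := by abel
  simp only [sparsegenObj, h₁, norm_add_sq_real, inner_sub_left, real_inner_smul_left]
  ring

def sparsegenCenter (u : EuclideanSpace ℝ (Fin E)) (lam : ℝ) : EuclideanSpace ℝ (Fin E) :=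
  WithLp.toLp 2 fun k => (u k + ((1 - lam) - ∑ i, u i) / E) / (1 - lam)

theorem inner_sub_sparsegenCenter (hlam : lam ≠ 1) (d : EuclideanSpace ℝ (Fin E)) :
    inner ℝ ((1 - lam) • sparsegenCenter u lam - u) d = ((1 - lam) - ∑ i, u i) / E * ∑ i, d i := by
  have h : 1 - lam ≠ 0 := sub_ne_zero.2 (Ne.symm hlam)
  simp only [PiLp.inner_apply, PiLp.sub_apply, PiLp.smul_apply, sparsegenCenter, Finset.mul_sum,
    smul_eq_mul, RCLike.inner_apply, Real.ringHom_apply]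
  refine Finset.sum_congr rfl fun k _ => ?_
  field_simp
  ring

theorem sum_sparsegenCenter (hE : E ≠ 0) (hlam : lam ≠ 1) :
    ∑ i, sparsegenCenter u lam i = 1 := by
  have h : 1 - lam ≠ 0 := sub_ne_zero.2 (Ne.symm hlam)
  simp only [sparsegenCenter, ← Finset.sum_div, Finset.sum_add_distrib, Finset.sum_const,
    Finset.card_univ, Fintype.card_fin, nsmul_eq_mul]
  field_simp
  ring

theorem sparsegenCenter_pos_iff (hE : E ≠ 0) (hlam : lam < 1) (k : Fin E) :
    0 < sparsegenCenter u lam k ↔ lam < 1 - ((∑ i, u i) - E * u k) := by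
  have hE' : (0 : ℝ) < E := by positivity
  simp only [sparsegenCenter, div_pos_iff_of_pos_right (sub_pos.2 hlam)]
  rw [← mul_pos_iff_of_pos_left hE', mul_add, mul_div_cancel₀ _ hE'.ne']
  constructor <;> intro h <;> linarith

theorem sparsegenObj_eq_sparsegenCenter_add (hE : E ≠ 0) (hlam : lam ≠ 1)
    {x : EuclideanSpace ℝ (Fin E)} (hx : ∑ i, x i = 1) :
    sparsegenObj u lam x =
      sparsegenObj u lam (sparsegenCenter u lam) + (1 - lam) * ‖x - sparsegenCenter u lam‖ ^ 2 := by
  have hd : ∑ i, (x - sparsegenCenter u lam) i = 0 := by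
    simp [Finset.sum_sub_distrib, hx, sum_sparsegenCenter hE hlam]
  conv_lhs => rw [← add_sub_cancel (sparsegenCenter u lam) x]
  rw [sparsegenObj_add, inner_sub_sparsegenCenter hlam, hd]
  ring

theorem eq_sparsegenCenter_of_isMinOn (hE : E ≠ 0) (hlam : lam < 1) (hp : ∑ i, p i = 1)
    (hmin : IsMinOn (sparsegenObj u lam) (simplex E) p)
    (hcenter : sparsegenCenter u lam ∈ simplex E) :
    p = sparsegenCenter u lam := by
  have hle := hmin hcenter
  rw [Set.mem_ofPred_eq, sparsegenObj_eq_sparsegenCenter_add hE hlam.ne hp] at hle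
  have hnorm : ‖p - sparsegenCenter u lam‖ ^ 2 ≤ 0 :=
    nonpos_of_mul_nonpos_right (by linarith) (sub_pos.2 hlam)
  simpa [sub_eq_zero] using hnorm

theorem eq_sparsegenCenter_of_isMinOn_of_pos (hE : E ≠ 0) (hlam : lam < 1) (hp : p ∈ simplex E)
    (hmin : IsMinOn (sparsegenObj u lam) (simplex E) p) (hpos : ∀ i, 0 < p i) :
    p = sparsegenCenter u lam := by
  set q := sparsegenCenter u lam
  have hq : ∑ i, q i = 1 := sum_sparsegenCenter hE hlam.ne
  -- `p` is interior in the simplex, so it can be moved a little towards `q`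
  have hnear : ∀ᶠ t in 𝓝 (0 : ℝ), t < 1 ∧ ∀ i, 0 < p i + t * (q i - p i) := by
    refine (gt_mem_nhds one_pos).and (eventually_all.2 fun i => ?_)
    have hcont : Continuous fun t : ℝ => p i + t * (q i - p i) := by fun_prop
    exact (hcont.tendsto' 0 (p i) (by simp)).eventually (lt_mem_nhds (hpos i))
  obtain ⟨t, ⟨ht1, hpt⟩, ht0 : 0 < t⟩ :=
    ((hnear.filter_mono nhdsWithin_le_nhds).and (self_mem_nhdsWithin (s := Set.Ioi 0))).exists
  have hmem : p + t • (q - p) ∈ simplex E := by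
    refine ⟨fun i => (hpt i).le, ?_⟩
    simp [Finset.sum_add_distrib, ← Finset.mul_sum, Finset.sum_sub_distrib, hp.2, hq]
  have hle := hmin hmem
  have hseg : p + t • (q - p) - q = (1 - t) • (p - q) := by module
  rw [Set.mem_ofPred_eq, sparsegenObj_eq_sparsegenCenter_add hE hlam.ne hp.2,
    sparsegenObj_eq_sparsegenCenter_add hE hlam.ne hmem.2, hseg, norm_smul, mul_pow,
    Real.norm_eq_abs, sq_abs] at hle
  have hshrink : (1 - lam) * (t * (2 - t)) * ‖p - q‖ ^ 2 ≤ 0 := by linear_combination hle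
  have hnorm : ‖p - q‖ ^ 2 ≤ 0 :=
    nonpos_of_mul_nonpos_right hshrink (mul_pos (sub_pos.2 hlam) (mul_pos ht0 (by linarith)))
  simpa [sub_eq_zero] using hnorm

end

/-- Full activation (`k = E`): for every `u ∈ ℝ^E` and `λ < 1`, the Sparsegen
routing output `p*` (the unique minimizer over the simplex) satisfies `p*_i > 0`
for all `i` if and only if `λ < 1 − (U_E − E·u_(E))`, where `U_E = Σ_i u_(i)` and
`u_(E) = u (σ ⟨E-1,_⟩)` is the smallest coordinate. -/
theorem full_activation_iff (E : ℕ) (hE : 1 ≤ E)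
    (u : EuclideanSpace ℝ (Fin E)) (σ : Equiv.Perm (Fin E))
    (hσ : Antitone fun i => u (σ i)) (lam : ℝ) (hlam : lam < 1)
    (p : EuclideanSpace ℝ (Fin E)) (hp : p ∈ simplex E)
    (hmin : IsMinOn (sparsegenObj u lam) (simplex E) p) :
    (∀ i : Fin E, 0 < p i) ↔
      lam < 1 - ((∑ i : Fin E, u (σ i)) - E * u (σ ⟨E - 1, by omega⟩)) := by
  have hE₀ : E ≠ 0 := by omega
  rw [Equiv.sum_comp σ u]
  constructor
  · intro hpos
    have hpq := eq_sparsegenCenter_of_isMinOn_of_pos hE₀ hlam hp hmin hpos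
    rw [hpq] at hpos
    exact (sparsegenCenter_pos_iff hE₀ hlam _).1 (hpos _)
  · intro hcond
    have hcenter (k : Fin E) : 0 < sparsegenCenter u lam k := by
      have hlast : u (σ ⟨E - 1, by omega⟩) ≤ u k := by
        simpa using hσ (show σ.symm k ≤ ⟨E - 1, by omega⟩ from
          Fin.le_def.2 (Nat.le_sub_one_of_lt (σ.symm k).isLt))
      have := mul_le_mul_of_nonneg_left hlast (Nat.cast_nonneg E : (0 : ℝ) ≤ E)
      rw [sparsegenCenter_pos_iff hE₀ hlam]
      linarith
    rw [eq_sparsegenCenter_of_isMinOn hE₀ hlam hp.2 hmin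
      ⟨fun k => (hcenter k).le, sum_sparsegenCenter hE₀ hlam.ne⟩]
    exact hcenter
end
end
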